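/- With P(γ) as above (P_{i,j} = (−i−γ)_j/(1−γ)_j), one has P(γ)·P(−γ) = (d!/(1−γ)_d)·I. In particular P(γ) is invertible. -/

import Mathlib

/-!
Write `S(m) = ∑_{j<p} (m-γ)_j / (1-γ)_j` with `p = d + 1`. Since `(x)_p = x^p - x` in
characteristic `p`, `(x)_p` does not change when `x` is shifted by an element of the prime
field; hence the summand of `(P(γ) P(-γ))_{ik}` is `p`-periodic in `j`, and shifting the sum by
`k` turns that entry into `(-1)^k (-i-γ)_k / (1+γ)_k · S(k-i)`. For `m ≠ 0` in the prime field
`S(m)` telescopes to `0`, while `S(0) = -γ ∑_j 1/(j-γ)` is a logarithmic derivative of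
`∏_j (X + j) = X^p - X`; with Wilson's theorem this gives `d!/(1-γ)_d`.
-/

/-- The Pochhammer symbol `(a)_r = a(a+1)⋯(a+r-1)`. -/
def poch {F : Type*} [Field F] (a : F) (r : ℕ) : F :=
  ∏ ℓ ∈ Finset.range r, (a + ℓ)

/-- The matrix `P(γ)` with entries `(-i-γ)_j / (1-γ)_j`. -/
def Pmat {F : Type*} [Field F] (d : ℕ) (γ : F) : Matrix (Fin (d + 1)) (Fin (d + 1)) F :=
  Matrix.of fun i j : Fin (d + 1) =>
    poch (-(i.val : F) - γ) j.val / poch (1 - γ) j.val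

open Finset Polynomial
open scoped Nat

section Pochhammer

variable {F : Type*} [Field F]

theorem poch_zero (a : F) : poch a 0 = 1 := prod_range_zero _

theorem poch_succ (a : F) (r : ℕ) : poch a (r + 1) = poch a r * (a + r) := prod_range_succ _ _

theorem poch_add (a : F) (r s : ℕ) : poch a (r + s) = poch a r * poch (a + r) s := by
  rw [poch, prod_range_add]
  exact congrArg _ (prod_congr rfl fun i _ => by push_cast; ring)

theorem poch_one_add (a : F) (r : ℕ) : poch a (1 + r) = a * poch (a + 1) r := by
  rw [poch_add, poch, prod_range_one, Nat.cast_zero, add_zero, Nat.cast_one]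

theorem poch_reflect (a : F) (k : ℕ) : poch (-a - k + 1) k = (-1) ^ k * poch a k := by
  have h (j) (hj : j ∈ range k) : -a - k + 1 + ((k - 1 - j : ℕ) : F) = -1 * (a + j) := by
    rw [Nat.cast_sub (by grind), Nat.cast_sub (by grind)]
    push_cast
    ring
  rw [poch, ← prod_range_reflect, prod_congr rfl h, prod_mul_distrib, prod_const, card_range,
    poch]

theorem poch_ne_zero {a : F} {r : ℕ} (h : ∀ ℓ < r, a + ℓ ≠ 0) : poch a r ≠ 0 :=
  prod_ne_zero_iff.2 fun ℓ hℓ => h ℓ (mem_range.1 hℓ)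

theorem sub_mul_sum_poch_div_poch_add_one (a b : F) (N : ℕ) (hb : poch b N ≠ 0) :
    (a - b) * ∑ j ∈ range N, poch a j / poch (b + 1) j = b * (poch a N / poch b N - 1) := by
  induction N with
  | zero => simp [poch_zero]
  | succ N ih =>
    have hrel : poch b N * (b + N) = b * poch (b + 1) N := by
      rw [← poch_succ, add_comm, poch_one_add]
    have hbN : poch b N * (b + N) ≠ 0 := poch_succ b N ▸ hb
    have hb1 : b * poch (b + 1) N ≠ 0 := hrel ▸ hbN
    rw [sum_range_succ, mul_add, ih (left_ne_zero_of_mul hbN), poch_succ, poch_succ, hrel]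
    field_simp [left_ne_zero_of_mul hbN, left_ne_zero_of_mul hb1, right_ne_zero_of_mul hb1]
    linear_combination -poch a N * hrel

end Pochhammer

theorem Function.Periodic.sum_range_add {M : Type*} [AddCommMonoid M] {f : ℕ → M} {N : ℕ}
    (hf : Function.Periodic f N) (k : ℕ) :
    ∑ j ∈ range N, f (j + k) = ∑ j ∈ range N, f j := by
  induction k with
  | zero => rfl
  | succ k ih =>
    rw [← ih]
    obtain _ | N := N
    · rfl
    rw [sum_range_succ, sum_range_succ', zero_add, ← hf k]
    congr 1
    · exact sum_congr rfl fun j _ => congrArg f (by omega)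
    · exact congrArg f (by omega)

section CharP

variable {F : Type*} [Field F] {p : ℕ} [hp : Fact p.Prime] [CharP F p]

theorem prod_X_add_natCast : ∏ l ∈ range p, (X + C (l : F)) = X ^ p - X := by
  have hp1 := hp.out.one_lt
  have hQ : (∏ l ∈ range p, (X + C (l : F))).Monic :=
    monic_prod_of_monic _ _ fun l _ => monic_X_add_C _
  have hR : (X ^ p - X : F[X]).Monic := monic_X_pow_sub (by simpa using hp1)
  have hdeg : (∏ l ∈ range p, (X + C (l : F))).natDegree = (X ^ p - X : F[X]).natDegree := by
    rw [natDegree_prod_of_monic _ _ fun l _ => monic_X_add_C _,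
      FiniteField.X_pow_card_sub_X_natDegree_eq _ hp1]
    simp only [natDegree_X_add_C, sum_const, card_range, smul_eq_mul, mul_one]
  classical
  refine eq_of_degree_sub_lt_of_eval_finset_eq ((range p).image fun l : ℕ => -(l : F)) ?_ ?_
  · rw [card_image_of_injOn, card_range]
    · calc _ < (X ^ p - X : F[X]).degree :=
            degree_sub_lt_right (by rw [degree_eq_natDegree hQ.ne_zero,
              degree_eq_natDegree hR.ne_zero, hdeg]) hR.ne_zero
              (by rw [hQ.leadingCoeff, hR.leadingCoeff])
        _ = p := by
          rw [degree_eq_natDegree hR.ne_zero, FiniteField.X_pow_card_sub_X_natDegree_eq _ hp1]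
    · intro a ha b hb hab
      exact CharP.natCast_injOn_Iio F p (by simpa using ha) (by simpa using hb) (neg_inj.1 hab)
  · simp only [mem_image, mem_range, forall_exists_index, and_imp]
    rintro _ l hl rfl
    rw [eval_prod, prod_eq_zero (mem_range.2 hl) (by simp), eval_sub, eval_pow, eval_X,
      ← frobenius_def, map_neg, map_natCast, sub_self]

theorem poch_char (b : F) : poch b p = b ^ p - b := by
  simpa [poch, eval_prod] using congrArg (eval b) (prod_X_add_natCast (F := F) (p := p))

theorem sum_inv_add_natCast {b : F} (hb : b ^ p ≠ b) :
    ∑ l ∈ range p, (b + l)⁻¹ = -(b ^ p - b)⁻¹ := by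
  -- differentiating `∏ (X + l) = X ^ p - X` gives `∑ l, ∏ m ≠ l, (b + m) = -1`
  have hderiv := congrArg (fun P => eval b (derivative P)) (prod_X_add_natCast (F := F) (p := p))
  simp only [derivative_prod_finset, derivative_X_add_C, mul_one, eval_finsetSum, eval_prod,
    eval_add, eval_X, eval_C, derivative_sub, derivative_X_pow, CharP.cast_eq_zero, map_zero,
    zero_mul, derivative_X, zero_sub, eval_neg, eval_one] at hderiv
  have hW : ∏ l ∈ range p, (b + (l : F)) = b ^ p - b := poch_char b
  have hterm (l) (hl : l ∈ range p) :
      (b + l)⁻¹ = (∏ m ∈ (range p).erase l, (b + m)) / (b ^ p - b) := by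
    have hsplit := (mul_prod_erase _ (fun m : ℕ => b + (m : F)) hl).trans hW
    rw [← hsplit, div_mul_cancel_right₀]
    exact right_ne_zero_of_mul (hsplit ▸ sub_ne_zero.2 hb)
  rw [sum_congr rfl hterm, ← sum_div, hderiv, neg_div, one_div]

theorem pow_char_eq_iff_mem_bot {x : F} : x ^ p = x ↔ x ∈ (⊥ : Subfield F) :=
  (Subfield.mem_bot_iff_pow_eq_self F p).symm

theorem poch_add_char_of_mem_bot {c : F} (hc : c ∈ (⊥ : Subfield F)) (b : F) :
    poch (c + b) p = poch b p := by
  rw [poch_char, poch_char, add_pow_char, pow_char_eq_iff_mem_bot.2 hc]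
  ring

theorem poch_sub_ne_zero_of_mem_bot {c γ : F} (hc : c ∈ (⊥ : Subfield F))
    (hγ : γ ∉ (⊥ : Subfield F)) (r : ℕ) : poch (c - γ) r ≠ 0 :=
  poch_ne_zero fun l _ h => hγ <| by
    rw [show γ = c + l by linear_combination -h]
    exact add_mem hc (natCast_mem _ l)

theorem sum_poch_sub_div_poch_one_sub_eq_zero {m γ : F} (hm : m ∈ (⊥ : Subfield F))
    (hm0 : m ≠ 0) (hγ : γ ∉ (⊥ : Subfield F)) :
    ∑ j ∈ range p, poch (m - γ) j / poch (1 - γ) j = 0 := by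
  have hγ0 : poch (-γ) p ≠ 0 := by
    simpa using poch_sub_ne_zero_of_mem_bot (zero_mem _) hγ p
  have h := sub_mul_sum_poch_div_poch_add_one (m - γ) (-γ) p hγ0
  rw [sub_eq_add_neg m, poch_add_char_of_mem_bot hm, div_self hγ0, sub_self, mul_zero,
    ← sub_eq_add_neg, sub_neg_eq_add, sub_add_cancel, neg_add_eq_sub] at h
  exact (mul_eq_zero.1 h).resolve_left hm0

theorem sum_poch_neg_div_poch_one_sub {γ : F} (hγ : γ ∉ (⊥ : Subfield F)) :
    ∑ j ∈ range p, poch (-γ) j / poch (1 - γ) j = γ / poch (-γ) p := by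
  have hterm (j : ℕ) : poch (-γ) j / poch (1 - γ) j = -γ * (-γ + j)⁻¹ := by
    have hrec : poch (-γ) j * (-γ + j) = -γ * poch (1 - γ) j := by
      rw [← poch_succ, add_comm, poch_one_add, neg_add_eq_sub]
    have h1 : poch (1 - γ) j ≠ 0 := poch_sub_ne_zero_of_mem_bot (one_mem _) hγ j
    have h2 : -γ + j ≠ 0 := by
      simpa [poch, neg_add_eq_sub] using poch_sub_ne_zero_of_mem_bot (natCast_mem _ j) hγ 1
    field_simp
    linear_combination hrec
  have hnγ : (-γ) ^ p ≠ -γ := fun h => hγ (neg_mem_iff.1 (pow_char_eq_iff_mem_bot.1 h))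
  rw [sum_congr rfl fun j _ => hterm j, ← mul_sum, sum_inv_add_natCast hnγ, poch_char]
  field_simp

theorem periodic_poch_sub_div_poch_one_sub {c γ : F} (hc : c ∈ (⊥ : Subfield F))
    (hγ : γ ∉ (⊥ : Subfield F)) :
    Function.Periodic (fun j : ℕ => poch (c - γ) j / poch (1 - γ) j) p := by
  intro j
  have hshift {e : F} (he : e ∈ (⊥ : Subfield F)) : poch (e - γ + j) p = poch (-γ) p := by
    rw [show e - γ + j = (e + j) + -γ by ring]
    exact poch_add_char_of_mem_bot (add_mem he (natCast_mem _ j)) _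
  simp only [poch_add, hshift hc, hshift (one_mem _)]
  exact mul_div_mul_right _ _ (by simpa using poch_sub_ne_zero_of_mem_bot (zero_mem _) hγ p)

end CharP

section Matrix

variable {F : Type*} [Field F] {d : ℕ} [Fact (d + 1).Prime] [CharP F (d + 1)]

theorem Pmat_mul_Pmat_neg_apply {γ : F} (hγ : γ ∉ (⊥ : Subfield F)) (i k : Fin (d + 1)) :
    (Pmat d γ * Pmat d (-γ)) i k =
      (-1) ^ (k : ℕ) * poch (-(i : ℕ) - γ) k / poch (1 - -γ) k *
        ∑ j ∈ range (d + 1), poch ((k : ℕ) - (i : ℕ) - γ) j / poch (1 - γ) j := by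
  set I : ℕ := i.val
  set K : ℕ := k.val
  set f : ℕ → F := fun j => poch (-I - γ) j / poch (1 - γ) j * poch (-j - -γ) K
  have hper : Function.Periodic f (d + 1) := by
    refine (periodic_poch_sub_div_poch_one_sub (neg_mem (natCast_mem _ I)) hγ).mul fun j => ?_
    simp only [Nat.cast_add j (d + 1), CharP.cast_eq_zero, add_zero]
  have hshift (j : ℕ) :
      f (j + K) = (-1) ^ K * poch (-I - γ) K * (poch (K - I - γ) j / poch (1 - γ) j) := by
    have hj : poch (1 - γ + j) K ≠ 0 := by
      simpa [add_sub_right_comm] using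
        poch_sub_ne_zero_of_mem_bot (add_mem (one_mem _) (natCast_mem _ j)) hγ K
    have hrefl : poch (-(j + K : ℕ) - -γ) K = (-1) ^ K * poch (1 - γ + j) K := by
      rw [← poch_reflect]; push_cast; ring_nf
    simp only [f]
    have h1 : poch (1 - γ) j ≠ 0 := poch_sub_ne_zero_of_mem_bot (one_mem _) hγ j
    rw [hrefl, add_comm j K, poch_add, add_comm K j, poch_add,
      show (-I - γ + K : F) = K - I - γ by ring]
    field_simp
  calc (Pmat d γ * Pmat d (-γ)) i k = (∑ j ∈ range (d + 1), f j) / poch (1 - -γ) K := by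
        simp only [Matrix.mul_apply, Pmat, Matrix.of_apply, sum_div, f]
        rw [← Fin.sum_univ_eq_sum_range]
        exact sum_congr rfl fun j _ => (mul_div_assoc _ _ _).symm
    _ = (∑ j ∈ range (d + 1), f (j + K)) / poch (1 - -γ) K := by rw [hper.sum_range_add]
    _ = _ := by simp only [hshift, ← mul_sum]; ring

theorem cast_factorial_eq_neg_one : ((d ! : ℕ) : F) = -1 := by
  simpa using congrArg (ZMod.castHom dvd_rfl F) (ZMod.wilsons_lemma (p := d + 1))

theorem Pmat_mul_Pmat_neg {γ : F} (hγ : γ ∉ (⊥ : Subfield F)) :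
    Pmat d γ * Pmat d (-γ) = ((d ! : F) / poch (1 - γ) d) • (1 : Matrix _ _ F) := by
  have hdiag :
      ∑ j ∈ range (d + 1), poch (-γ) j / poch (1 - γ) j = (d ! : F) / poch (1 - γ) d := by
    have hγ0 : γ ≠ 0 := fun h => hγ (h ▸ zero_mem _)
    have h1 : poch (1 - γ) d ≠ 0 := poch_sub_ne_zero_of_mem_bot (one_mem _) hγ d
    rw [sum_poch_neg_div_poch_one_sub hγ, add_comm, poch_one_add, neg_add_eq_sub,
      cast_factorial_eq_neg_one]
    field_simp
  ext i k
  rw [Pmat_mul_Pmat_neg_apply hγ, Matrix.smul_apply, Matrix.one_apply]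
  split_ifs with hik
  · subst hik
    have hrefl : (-1) ^ (i : ℕ) * poch (-(i : ℕ) - γ) i = poch (1 - -γ) i := by
      rw [← poch_reflect]; ring_nf
    have hpos : poch (1 - -γ) i ≠ 0 :=
      poch_sub_ne_zero_of_mem_bot (one_mem _) (neg_mem_iff.not.2 hγ) i
    rw [sub_self, zero_sub, hdiag, hrefl, div_self hpos, one_mul, smul_eq_mul, mul_one]
  · have hne : ((k : ℕ) : F) - (i : ℕ) ≠ 0 := fun h => hik <| Fin.ext <|
      (CharP.natCast_injOn_Iio F (d + 1) i.isLt k.isLt (sub_eq_zero.1 h).symm)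
    rw [sum_poch_sub_div_poch_one_sub_eq_zero (sub_mem (natCast_mem _ _) (natCast_mem _ _))
      hne hγ, mul_zero, smul_zero]

theorem Matrix.isUnit_of_mul_eq_smul_one {n K : Type*} [Fintype n] [DecidableEq n] [Field K]
    {A B : Matrix n n K} {c : K} (hc : c ≠ 0) (h : A * B = c • 1) : IsUnit A :=
  IsUnit.of_mul_eq_one (c⁻¹ • B) <| by
    rw [Matrix.mul_smul, h, smul_smul, inv_mul_cancel₀ hc, one_smul]

end Matrix

theorem stmt8_general {F : Type*} [Field F] (d : ℕ)
    (hprime : Nat.Prime (d + 1)) (hchar : CharP F (d + 1)) (γ : F)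
    (hγ : ∀ i : ℕ, i ≤ d → γ ≠ (i : F)) :
    Pmat d γ * Pmat d (-γ) =
        ((Nat.factorial d : F) / poch (1 - γ) d) •
          (1 : Matrix (Fin (d + 1)) (Fin (d + 1)) F) ∧
      IsUnit (Pmat d γ) := by
  have : Fact (d + 1).Prime := ⟨hprime⟩
  have hγ' : γ ∉ (⊥ : Subfield F) := by
    rw [mem_bot_iff_intCast (d + 1)]
    rintro ⟨n, rfl⟩
    exact hγ _ (Nat.lt_succ_iff.1 (ZMod.val_lt (n : ZMod (d + 1))))
      (by rw [ZMod.natCast_val, ZMod.cast_intCast'])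
  have hmul := Pmat_mul_Pmat_neg hγ'
  refine ⟨hmul, Matrix.isUnit_of_mul_eq_smul_one (div_ne_zero ?_ ?_) hmul⟩
  · rw [cast_factorial_eq_neg_one]; exact neg_ne_zero.2 one_ne_zero
  · exact poch_sub_ne_zero_of_mem_bot (one_mem _) hγ' d

theorem stmt8 {F : Type*} [Field F] (d : ℕ) (hd : 1 ≤ d)
    (hprime : Nat.Prime (d + 1)) (hchar : CharP F (d + 1)) (γ : F)
    (hγ : ∀ i : ℕ, i ≤ d → γ ≠ (i : F)) :
    Pmat d γ * Pmat d (-γ) =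
        ((Nat.factorial d : F) / poch (1 - γ) d) •
          (1 : Matrix (Fin (d + 1)) (Fin (d + 1)) F) ∧
      IsUnit (Pmat d γ) :=
  stmt8_general d hprime hchar γ hγ
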